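/- Let f be a moving phantom mechanism for m = 3 projects and let V be a locally maximal preference profile, i.e., ℓ(V) ≥ ℓ(V_{-i}, v'_i) for every voter i and every division v'_i. Then there exists a three-type profile V̂ (for f) such that ℓ(V̂) ≥ ℓ(V). -/

import Mathlib

open Finset

/-- A division among `m` projects: coordinates in `[0,1]` summing to `1`. -/
def IsDivision {m : ℕ} (x : Fin m → ℝ) : Prop :=
  (∀ j, 0 ≤ x j ∧ x j ≤ 1) ∧ ∑ j, x j = 1

/-- The ℓ1 distance between two vectors over `Fin m`. -/
noncomputable def l1 {m : ℕ} (x y : Fin m → ℝ) : ℝ := ∑ j, |x j - y j|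

/-- The proportional division (coordinatewise mean) of a profile. -/
noncomputable def propDiv {n m : ℕ} (V : Fin n → Fin m → ℝ) : Fin m → ℝ :=
  fun j => (∑ i, V i j) / (n : ℝ)

/-- The `(k+1)`-th smallest element of a multiset of reals. -/
noncomputable def medianAt (s : Multiset ℝ) (k : ℕ) : ℝ :=
  (s.sort (· ≤ ·)).getD k 0

/-- Voter reports on project `j` together with the `n+1` phantom values `p 0, …, p n`. -/
noncomputable def projValues {n m : ℕ} (V : Fin n → Fin m → ℝ)
    (p : ℕ → ℝ) (j : Fin m) : Multiset ℝ :=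
  (Multiset.map (fun i => V i j) Finset.univ.val) +
    (Multiset.map p (Finset.range (n + 1)).val)

/-- The median (the `(n+1)`-th smallest of the `2n+1` values) of the `n` voter reports
on project `j` together with the `n+1` phantom values. -/
noncomputable def phantomMedian {n m : ℕ} (V : Fin n → Fin m → ℝ)
    (p : ℕ → ℝ) (j : Fin m) : ℝ :=
  medianAt (projValues V p j) n

/-- A phantom system for `n` voters: continuous, weakly increasing functions
`y k : [0,1] → [0,1]`, `k = 0, …, n`, with `y k 0 = 0`, `y k 1 = 1`,
pointwise ordered in `k`. -/
structure PhantomSystem (n : ℕ) where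
  y : ℕ → ℝ → ℝ
  contOn : ∀ k ≤ n, ContinuousOn (y k) (Set.Icc 0 1)
  monoOn : ∀ k ≤ n, MonotoneOn (y k) (Set.Icc 0 1)
  mem_Icc : ∀ k ≤ n, ∀ t ∈ Set.Icc (0:ℝ) 1, y k t ∈ Set.Icc (0:ℝ) 1
  map_zero : ∀ k ≤ n, y k 0 = 0
  map_one : ∀ k ≤ n, y k 1 = 1
  mono_idx : ∀ t ∈ Set.Icc (0:ℝ) 1, ∀ k k', k ≤ k' → k' ≤ n → y k t ≤ y k' t

/-- `f` is the moving phantom mechanism associated with the phantom system `Y`: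
on each profile of divisions, for some `t*` making the medians sum to `1`,
it outputs on each project the median of the voter reports and the phantom values. -/
def IsMovingPhantom {n m : ℕ} (f : (Fin n → Fin m → ℝ) → (Fin m → ℝ))
    (Y : PhantomSystem n) : Prop :=
  ∀ V : Fin n → Fin m → ℝ, (∀ i, IsDivision (V i)) →
    ∃ t ∈ Set.Icc (0:ℝ) 1,
      (∑ j, phantomMedian V (fun k => Y.y k t) j) = 1 ∧
      ∀ j, f V j = phantomMedian V (fun k => Y.y k t) j

/-- Truthfulness of a budget aggregation mechanism: no voter `i` with true peak `V i`
can get an outcome closer (in ℓ1 distance) to her peak by reporting some division `v`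
instead of `V i`. -/
def Truthful {n m : ℕ} (f : (Fin n → Fin m → ℝ) → (Fin m → ℝ)) : Prop :=
  ∀ V : Fin n → Fin m → ℝ, (∀ i, IsDivision (V i)) →
    ∀ i : Fin n, ∀ v : Fin m → ℝ, IsDivision v →
      l1 (f V) (V i) ≤ l1 (f (Function.update V i v)) (V i)

/-- The ℓ1-loss of mechanism `f` on profile `V`. -/
noncomputable def loss {n m : ℕ} (f : (Fin n → Fin m → ℝ) → (Fin m → ℝ))
    (V : Fin n → Fin m → ℝ) : ℝ :=
  l1 (f V) (propDiv V)

/-- The phantom system of the Piecewise Uniform mechanism for `n` voters. -/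
noncomputable def puPhantom (n : ℕ) (k : ℕ) (t : ℝ) : ℝ :=
  if t < 1 / 2 then
    (if (k : ℝ) / (n : ℝ) < 1 / 2 then 0 else 4 * t * (k : ℝ) / (n : ℝ) - 2 * t)
  else
    (if (k : ℝ) / (n : ℝ) < 1 / 2 then (k : ℝ) * (2 * t - 1) / (n : ℝ)
     else (k : ℝ) * (3 - 2 * t) / (n : ℝ) - 2 + 2 * t)

/-- `w` is an output of the Piecewise Uniform mechanism on profile `V`. -/
def IsPUOutcome {n m : ℕ} (V : Fin n → Fin m → ℝ) (w : Fin m → ℝ) : Prop :=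
  ∃ t ∈ Set.Icc (0:ℝ) 1,
    (∑ j, phantomMedian V (fun k => puPhantom n k t) j) = 1 ∧
    ∀ j, w j = phantomMedian V (fun k => puPhantom n k t) j

/-- `w` is an output of the Independent Markets mechanism (phantoms `min (k·t) 1`)
on profile `V`. -/
def IsIMOutcome {n m : ℕ} (V : Fin n → Fin m → ℝ) (w : Fin m → ℝ) : Prop :=
  ∃ t : ℝ, 0 ≤ t ∧
    (∑ j, phantomMedian V (fun k => min ((k : ℝ) * t) 1) j) = 1 ∧
    ∀ j, w j = phantomMedian V (fun k => min ((k : ℝ) * t) 1) j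

/-- A single-minded division: it assigns the whole budget to one project. -/
def SingleMindedDiv {m : ℕ} (v : Fin m → ℝ) : Prop := ∃ j, v j = 1

/-- A double-minded division relative to an outcome `w` (three projects): it agrees with
`w` on one project `j`, proposes `1 - w j` on another project, and `0` on the third. -/
def DoubleMindedDiv (w v : Fin 3 → ℝ) : Prop :=
  ∃ j j' : Fin 3, j ≠ j' ∧ v j = w j ∧ v j' = 1 - w j ∧
    ∀ k, k ≠ j → k ≠ j' → v k = 0

/-- A three-type profile for mechanism `f`: each voter is fully-satisfied,
double-minded, or single-minded. -/
def ThreeTypeProfile {n : ℕ} (f : (Fin n → Fin 3 → ℝ) → (Fin 3 → ℝ))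
    (V : Fin n → Fin 3 → ℝ) : Prop :=
  ∀ i, V i = f V ∨ DoubleMindedDiv (f V) (V i) ∨ SingleMindedDiv (V i)

/-- The single-minded division fully supporting project `j`. -/
noncomputable def singleDiv (j : Fin 3) : Fin 3 → ℝ :=
  fun j' => if j' = j then 1 else 0

/-- The double-minded division proposing `x k` on project `k`, `1 - x k` on
project `j` and `0` on the remaining project. -/
noncomputable def doubleDiv (x : Fin 3 → ℝ) (k j : Fin 3) : Fin 3 → ℝ :=
  fun j' => if j' = k then x k else if j' = j then 1 - x k else 0

/-- A utilitarian mechanism: it always returns a division minimizing the total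
ℓ1 distance (social cost) to the voters' proposals. -/
def Utilitarian {n m : ℕ} (f : (Fin n → Fin m → ℝ) → (Fin m → ℝ)) : Prop :=
  ∀ V : Fin n → Fin m → ℝ, (∀ i, IsDivision (V i)) →
    IsDivision (f V) ∧
    ∀ x : Fin m → ℝ, IsDivision x → (∑ i, l1 (V i) (f V)) ≤ ∑ i, l1 (V i) x

/-!
Let `w = f V` and let `σ` be the sign pattern of `V̄ - w`, so that `ℓ(V) = ∑ⱼ σⱼ (V̄ⱼ - wⱼ)` is,
up to the constant `∑ⱼ σⱼ wⱼ`, the average over the voters of the linear score `∑ⱼ σⱼ vᵢⱼ`.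
Every voter can be replaced by a fully-satisfied, double-minded or single-minded division that
lies on the same side of `w` as `vᵢ` in every project and has at least the same score. Such a
replacement crosses no median, so at the same phantom parameter the medians are still `w`;
as medians are monotone in the parameter, any parameter at which they sum to one gives the same
outcome, so `f` still outputs `w`, and the loss, bounded below by the score average, cannot drop.
-/

theorem List.SortedLE.succ_le_countP_iff {α : Type*} [Preorder α] {l : List α}
    (hl : l.SortedLE) {p : α → Bool} (hp : ∀ ⦃x y⦄, x ≤ y → p y → p x)
    {k : ℕ} (hk : k < l.length) : k + 1 ≤ l.countP p ↔ p l[k] := by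
  constructor
  · intro h
    by_contra hpk
    have hdrop : (l.drop k).countP p = 0 := by
      refine List.countP_eq_zero.2 fun x hx hpx => hpk ?_
      obtain ⟨i, hi, rfl⟩ := List.getElem_of_mem hx
      rw [List.getElem_drop] at hpx
      exact hp (hl.getElem_le_getElem_of_le (Nat.le_add_right k i)) hpx
    have htake : (l.take k).countP p ≤ k := List.countP_le_length.trans (by simp)
    rw [← List.take_append_drop k l, List.countP_append] at h
    omega
  · intro hpk
    have htake : (l.take (k + 1)).countP p = k + 1 := by
      rw [List.countP_eq_length.2, List.length_take_of_le hk]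
      intro x hx
      obtain ⟨i, hi, rfl⟩ := List.getElem_of_mem hx
      rw [List.getElem_take]
      exact hp (hl.getElem_le_getElem_of_le (by simp at hi; omega)) hpk
    exact htake ▸ (List.take_sublist _ _).countP_le

theorem Multiset.countP_mono_left {α : Type*} {p q : α → Prop} [DecidablePred p]
    [DecidablePred q] {s : Multiset α} (h : ∀ x ∈ s, p x → q x) :
    s.countP p ≤ s.countP q := by
  induction s using Quotient.inductionOn
  simp only [Multiset.quot_mk_to_coe, Multiset.coe_countP]
  exact List.countP_mono_left (by simpa using h)

theorem Multiset.countP_map_le_countP_map {α : Type*} {p : ℝ → Prop} [DecidablePred p]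
    {s : Multiset α} {g h : α → ℝ} (hgh : ∀ a ∈ s, p (g a) → p (h a)) :
    (s.map g).countP p ≤ (s.map h).countP p := by
  simpa only [Multiset.countP_map, ← Multiset.countP_eq_card_filter]
    using Multiset.countP_mono_left hgh

section medianAt

variable {s : Multiset ℝ} {k : ℕ}

theorem medianAt_eq_getElem (hk : k < Multiset.card s) :
    medianAt s k = (s.sort (· ≤ ·))[k]'(by simpa using hk) :=
  List.getD_eq_getElem _ _ _

theorem medianAt_mem (hk : k < Multiset.card s) : medianAt s k ∈ s := by
  rw [medianAt_eq_getElem hk, ← Multiset.mem_sort (· ≤ ·)]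
  exact List.getElem_mem _

theorem succ_le_countP_iff_medianAt {p : ℝ → Prop} [DecidablePred p]
    (hp : ∀ ⦃x y⦄, x ≤ y → p y → p x) (hk : k < Multiset.card s) :
    k + 1 ≤ s.countP p ↔ p (medianAt s k) := by
  have h := (s.pairwise_sort (· ≤ ·)).sortedLE.succ_le_countP_iff (p := fun x => decide (p x))
    (fun x y hxy hy => by simpa using hp hxy (by simpa using hy)) (by simpa using hk)
  rw [← Multiset.coe_countP, Multiset.sort_eq] at h
  simpa [medianAt_eq_getElem hk] using h

theorem medianAt_le_iff (hk : k < Multiset.card s) {θ : ℝ} :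
    medianAt s k ≤ θ ↔ k + 1 ≤ s.countP (· ≤ θ) :=
  (succ_le_countP_iff_medianAt (fun _ _ => le_trans) hk).symm

theorem medianAt_lt_iff (hk : k < Multiset.card s) {θ : ℝ} :
    medianAt s k < θ ↔ k + 1 ≤ s.countP (· < θ) :=
  (succ_le_countP_iff_medianAt (fun _ _ => lt_of_le_of_lt) hk).symm

end medianAt

def SameSide {m : ℕ} (w v u : Fin m → ℝ) : Prop :=
  ∀ j, (v j ≤ w j → u j ≤ w j) ∧ (w j ≤ v j → w j ≤ u j)

section phantomMedian

variable {n m : ℕ}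

theorem lt_card_projValues (V : Fin n → Fin m → ℝ) (p : ℕ → ℝ) (j : Fin m) :
    n < Multiset.card (projValues V p j) := by
  simp [projValues]

theorem countP_projValues (V : Fin n → Fin m → ℝ) (p : ℕ → ℝ) (j : Fin m) (P : ℝ → Prop)
    [DecidablePred P] : (projValues V p j).countP P =
      (univ.val.map fun i => V i j).countP P + ((range (n + 1)).val.map p).countP P :=
  Multiset.countP_add _ _ _

theorem phantomMedian_mono (V : Fin n → Fin m → ℝ) {p q : ℕ → ℝ} (hpq : ∀ k ≤ n, p k ≤ q k)
    (j : Fin m) : phantomMedian V p j ≤ phantomMedian V q j := by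
  rw [phantomMedian, medianAt_le_iff (lt_card_projValues V p j)]
  refine ((medianAt_le_iff (lt_card_projValues V q j)).1 le_rfl).trans ?_
  rw [countP_projValues, countP_projValues]
  exact Nat.add_le_add_left (Multiset.countP_map_le_countP_map fun k hk hqk =>
    (hpq k (Nat.lt_succ_iff.1 (Multiset.mem_range.1 hk))).trans hqk) _

theorem phantomMedian_eq_of_sameSide {V W : Fin n → Fin m → ℝ} {p : ℕ → ℝ}
    (h : ∀ i, SameSide (phantomMedian V p) (V i) (W i)) (j : Fin m) :
    phantomMedian W p j = phantomMedian V p j := by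
  apply le_antisymm
  · rw [phantomMedian, medianAt_le_iff (lt_card_projValues W p j)]
    refine ((medianAt_le_iff (lt_card_projValues V p j)).1 le_rfl).trans ?_
    rw [countP_projValues, countP_projValues]
    exact Nat.add_le_add_right (Multiset.countP_map_le_countP_map fun i _ => (h i j).1) _
  · by_contra! hlt
    rw [phantomMedian, medianAt_lt_iff (lt_card_projValues W p j)] at hlt
    refine (medianAt_lt_iff (lt_card_projValues V p j)).not.1 (lt_irrefl _) (hlt.trans ?_)
    rw [countP_projValues, countP_projValues]
    exact Nat.add_le_add_right (Multiset.countP_map_le_countP_map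
      (p := (· < phantomMedian V p j)) fun i _ hW =>
        lt_of_not_ge fun hV => ((h i j).2 hV).not_gt hW) _

end phantomMedian

namespace PhantomSystem

variable {n m : ℕ} (Y : PhantomSystem n) (V : Fin n → Fin m → ℝ)

theorem phantomMedian_mono {s s' : ℝ} (hs : s ∈ Set.Icc (0 : ℝ) 1) (hs' : s' ∈ Set.Icc (0 : ℝ) 1)
    (hss' : s ≤ s') (j : Fin m) :
    phantomMedian V (fun k => Y.y k s) j ≤ phantomMedian V (fun k => Y.y k s') j :=
  _root_.phantomMedian_mono V (fun k hk => Y.monoOn k hk hs hs' hss') j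

theorem phantomMedian_eq_of_sum_eq {s s' : ℝ} (hs : s ∈ Set.Icc (0 : ℝ) 1)
    (hs' : s' ∈ Set.Icc (0 : ℝ) 1)
    (hsum : ∑ j, phantomMedian V (fun k => Y.y k s) j = ∑ j, phantomMedian V (fun k => Y.y k s') j)
    (j : Fin m) : phantomMedian V (fun k => Y.y k s) j = phantomMedian V (fun k => Y.y k s') j := by
  rcases le_total s s' with hss' | hs's
  · exact (sum_eq_sum_iff_of_le fun j _ => Y.phantomMedian_mono V hs hs' hss' j).1 hsum j
      (mem_univ j)
  · exact ((sum_eq_sum_iff_of_le fun j _ => Y.phantomMedian_mono V hs' hs hs's j).1 hsum.symm j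
      (mem_univ j)).symm

theorem phantomMedian_mem_Icc (hV : ∀ i, IsDivision (V i)) {s : ℝ} (hs : s ∈ Set.Icc (0 : ℝ) 1)
    (j : Fin m) : phantomMedian V (fun k => Y.y k s) j ∈ Set.Icc (0 : ℝ) 1 := by
  have hmem : phantomMedian V (fun k => Y.y k s) j ∈ projValues V (fun k => Y.y k s) j :=
    medianAt_mem (lt_card_projValues V _ j)
  generalize phantomMedian V (fun k => Y.y k s) j = x at hmem ⊢
  simp only [projValues, Multiset.mem_add, Multiset.mem_map, Finset.mem_val, Finset.mem_range]
    at hmem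
  rcases hmem with ⟨i, -, rfl⟩ | ⟨k, hk, rfl⟩
  · exact (hV i).1 j
  · exact Y.mem_Icc k (Nat.lt_succ_iff.1 hk) s hs

end PhantomSystem

namespace IsMovingPhantom

variable {n m : ℕ} {f : (Fin n → Fin m → ℝ) → Fin m → ℝ} {Y : PhantomSystem n}
  {V : Fin n → Fin m → ℝ}

theorem isDivision (hf : IsMovingPhantom f Y) (hV : ∀ i, IsDivision (V i)) :
    IsDivision (f V) := by
  obtain ⟨t, ht, hsum, hfV⟩ := hf V hV
  simp only [IsDivision, hfV]
  exact ⟨fun j => Y.phantomMedian_mem_Icc V hV ht j, hsum⟩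

theorem apply_eq_phantomMedian (hf : IsMovingPhantom f Y) (hV : ∀ i, IsDivision (V i)) {s : ℝ}
    (hs : s ∈ Set.Icc (0 : ℝ) 1) (hsum : ∑ j, phantomMedian V (fun k => Y.y k s) j = 1)
    (j : Fin m) : f V j = phantomMedian V (fun k => Y.y k s) j := by
  obtain ⟨t, ht, hsum', hfV⟩ := hf V hV
  rw [hfV, Y.phantomMedian_eq_of_sum_eq V ht hs (hsum'.trans hsum.symm)]

end IsMovingPhantom

theorem exists_lt_of_sum_mul_lt {ι : Type*} [Fintype ι] {σ x y : ι → ℝ}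
    (hσ : ∀ j, σ j = 1 ∨ σ j = -1) (hsum : ∑ j, x j = ∑ j, y j)
    (hlt : ∑ j, σ j * x j < ∑ j, σ j * y j) : ∃ a, σ a = 1 ∧ x a < y a := by
  by_contra! h
  have hsplit : ∑ j, σ j * y j - ∑ j, σ j * x j = ∑ j, (σ j + 1) * (y j - x j) := by
    simp only [add_mul, mul_sub, one_mul, sum_add_distrib, sum_sub_distrib, hsum]
    ring
  have hterm : ∀ j, (σ j + 1) * (y j - x j) ≤ 0 := fun j => by
    rcases hσ j with h1 | h1 <;> rw [h1]
    · nlinarith [h j h1]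
    · norm_num
  linarith [sum_nonpos fun j (_ : j ∈ univ) => hterm j]

section ThreeProjects

theorem Fin.eq_or_eq_or_eq_of_ne {a b k : Fin 3} (hab : a ≠ b) (hka : k ≠ a) (hkb : k ≠ b)
    (j : Fin 3) : j = a ∨ j = b ∨ j = k := by
  omega

theorem Fin.sum_three_of_ne {M : Type*} [AddCommMonoid M] {a b k : Fin 3} (hab : a ≠ b)
    (hka : k ≠ a) (hkb : k ≠ b) (g : Fin 3 → M) : ∑ j, g j = g a + g b + g k := by
  have huniv : ({a, b, k} : Finset (Fin 3)) = univ := by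
    ext j
    simpa using Fin.eq_or_eq_or_eq_of_ne hab hka hkb j
  rw [← huniv, sum_insert (by simp [hab, hka.symm]), sum_insert (by simp [hkb.symm]),
    sum_singleton, add_assoc]

variable {w v σ : Fin 3 → ℝ} {a b k : Fin 3}

theorem isDivision_singleDiv (a : Fin 3) : IsDivision (singleDiv a) :=
  ⟨fun j => by unfold singleDiv; split <;> norm_num, by simp [singleDiv]⟩

theorem singleDiv_replaces (hab : a ≠ b) (hka : k ≠ a) (hkb : k ≠ b) (hw : IsDivision w)
    (hv : IsDivision v) (hσa : σ a = 1) (hσb : σ b = -1) (hσk : σ k = -1) (ha : w a < v a)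
    (hb : v b < w b) (hk : v k < w k) :
    SameSide w v (singleDiv a) ∧ ∑ j, σ j * v j ≤ ∑ j, σ j * singleDiv a j := by
  have hvsum : v a + v b + v k = 1 := Fin.sum_three_of_ne hab hka hkb v ▸ hv.2
  refine ⟨fun j => ?_, ?_⟩
  · rcases Fin.eq_or_eq_or_eq_of_ne hab hka hkb j with rfl | rfl | rfl
    · simp [singleDiv, (hw.1 j).2, not_le.2 ha]
    · simp [singleDiv, hab.symm, (hw.1 j).1, not_le.2 hb]
    · simp [singleDiv, hka, (hw.1 j).1, not_le.2 hk]
  · simp only [Fin.sum_three_of_ne hab hka hkb, singleDiv, hσa, hσb, hσk, hab.symm, hka,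
      ↓reduceIte]
    linarith [(hv.1 a).2]

theorem isDivision_doubleDiv (hab : a ≠ b) (hka : k ≠ a) (hkb : k ≠ b) (hw : IsDivision w) :
    IsDivision (doubleDiv w k a) := by
  refine ⟨fun j => ?_, ?_⟩
  · rcases Fin.eq_or_eq_or_eq_of_ne hab hka hkb j with rfl | rfl | rfl
    · simpa [doubleDiv, hka.symm] using (hw.1 k).symm
    · simp [doubleDiv, hab.symm, hkb.symm]
    · simpa [doubleDiv] using hw.1 j
  · simp only [Fin.sum_three_of_ne hab hka hkb, doubleDiv, hka.symm, hab.symm, hkb.symm,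
      ↓reduceIte]
    ring

theorem doubleMindedDiv_doubleDiv (hka : k ≠ a) : DoubleMindedDiv w (doubleDiv w k a) :=
  ⟨k, a, hka, by simp [doubleDiv], by simp [doubleDiv, hka.symm],
    fun j hjk hja => by simp [doubleDiv, hjk, hja]⟩

theorem doubleDiv_replaces (hab : a ≠ b) (hka : k ≠ a) (hkb : k ≠ b) (hw : IsDivision w)
    (hv : IsDivision v) (hσa : σ a = 1) (hσb : σ b = -1) (ha : w a < v a) (hb : v b < w b)
    (hk : σ k = 1 ∨ σ k = -1 ∧ w k ≤ v k) :
    SameSide w v (doubleDiv w k a) ∧ ∑ j, σ j * v j ≤ ∑ j, σ j * doubleDiv w k a j := by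
  have hwsum : w a + w b + w k = 1 := Fin.sum_three_of_ne hab hka hkb w ▸ hw.2
  have hvsum : v a + v b + v k = 1 := Fin.sum_three_of_ne hab hka hkb v ▸ hv.2
  refine ⟨fun j => ?_, ?_⟩
  · rcases Fin.eq_or_eq_or_eq_of_ne hab hka hkb j with rfl | rfl | rfl
    · simp only [doubleDiv, hka.symm, ↓reduceIte, not_le.2 ha, false_imp_iff, true_and]
      exact fun _ => by linarith [(hw.1 b).1]
    · simp [doubleDiv, hab.symm, hkb.symm, (hw.1 j).1, not_le.2 hb]
    · simp [doubleDiv]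
  · simp only [Fin.sum_three_of_ne hab hka hkb, doubleDiv, hka.symm, hab.symm, hkb.symm,
      ↓reduceIte, hσa, hσb]
    rcases hk with hσk | ⟨hσk, hk⟩ <;> rw [hσk] <;> linarith [(hv.1 b).1, (hv.1 k).1]

theorem exists_threeType_replacement (hw : IsDivision w) (hv : IsDivision v)
    (hσ : ∀ j, σ j = 1 ∨ σ j = -1) :
    ∃ u, IsDivision u ∧ (u = w ∨ DoubleMindedDiv w u ∨ SingleMindedDiv u) ∧ SameSide w v u ∧
      ∑ j, σ j * v j ≤ ∑ j, σ j * u j := by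
  by_cases hle : ∑ j, σ j * v j ≤ ∑ j, σ j * w j
  · exact ⟨w, hw, Or.inl rfl, fun j => ⟨fun _ => le_rfl, fun _ => le_rfl⟩, hle⟩
  rw [not_le] at hle
  obtain ⟨a, hσa, ha⟩ := exists_lt_of_sum_mul_lt hσ (hw.2.trans hv.2.symm) hle
  obtain ⟨b, hσb, hb⟩ := exists_lt_of_sum_mul_lt (σ := -σ)
    (by simpa [or_comm, neg_eq_iff_eq_neg] using hσ) (hv.2.trans hw.2.symm) (by simpa using hle)
  rw [Pi.neg_apply, neg_eq_iff_eq_neg] at hσb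
  have hab : a ≠ b := by rintro rfl; linarith
  obtain ⟨k, hka, hkb⟩ := (by decide : ∀ a b : Fin 3, ∃ k, k ≠ a ∧ k ≠ b) a b
  by_cases hk : σ k = -1 ∧ v k < w k
  · obtain ⟨hsame, hscore⟩ := singleDiv_replaces hab hka hkb hw hv hσa hσb hk.1 ha hb hk.2
    exact ⟨singleDiv a, isDivision_singleDiv a, Or.inr (Or.inr ⟨a, by simp [singleDiv]⟩),
      hsame, hscore⟩
  · have hk' : σ k = 1 ∨ σ k = -1 ∧ w k ≤ v k := by
      rcases hσ k with h | h
      · exact Or.inl h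
      · exact Or.inr ⟨h, le_of_not_gt fun hlt => hk ⟨h, hlt⟩⟩
    obtain ⟨hsame, hscore⟩ := doubleDiv_replaces hab hka hkb hw hv hσa hσb ha hb hk'
    exact ⟨doubleDiv w k a, isDivision_doubleDiv hab hka hkb hw,
      Or.inr (Or.inl (doubleMindedDiv_doubleDiv hka)), hsame, hscore⟩

end ThreeProjects

section Loss

variable {n m : ℕ}

noncomputable def signPattern (x y : Fin m → ℝ) (j : Fin m) : ℝ :=
  if x j ≤ y j then 1 else -1

theorem signPattern_eq_one_or_neg_one (x y : Fin m → ℝ) (j : Fin m) :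
    signPattern x y j = 1 ∨ signPattern x y j = -1 := by
  unfold signPattern
  split <;> simp

theorem l1_eq_sum_signPattern_mul (x y : Fin m → ℝ) :
    l1 x y = ∑ j, signPattern x y j * (y j - x j) := by
  refine sum_congr rfl fun j _ => ?_
  unfold signPattern
  split
  · rw [abs_sub_comm, abs_of_nonneg (by linarith), one_mul]
  · rw [abs_of_pos (by linarith)]
    ring

theorem sum_mul_sub_le_l1 {σ : Fin m → ℝ} (hσ : ∀ j, σ j = 1 ∨ σ j = -1) (x y : Fin m → ℝ) :
    ∑ j, σ j * (y j - x j) ≤ l1 x y := by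
  refine sum_le_sum fun j _ => ?_
  rcases hσ j with h | h <;> rw [h]
  · simpa [abs_sub_comm] using le_abs_self (y j - x j)
  · simpa using le_abs_self (x j - y j)

theorem sum_mul_propDiv (σ : Fin m → ℝ) (V : Fin n → Fin m → ℝ) :
    ∑ j, σ j * propDiv V j = (∑ i, ∑ j, σ j * V i j) / n := by
  simp only [propDiv, mul_div_assoc', ← sum_div, mul_sum]
  rw [sum_comm]

theorem l1_propDiv_le_of_sum_signPattern_mul_le {w : Fin m → ℝ} {V W : Fin n → Fin m → ℝ}
    (h : ∀ i, ∑ j, signPattern w (propDiv V) j * V i j ≤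
      ∑ j, signPattern w (propDiv V) j * W i j) :
    l1 w (propDiv V) ≤ l1 w (propDiv W) := by
  set σ := signPattern w (propDiv V)
  calc l1 w (propDiv V) = ∑ j, σ j * propDiv V j - ∑ j, σ j * w j := by
        rw [l1_eq_sum_signPattern_mul, ← sum_sub_distrib]
        simp only [mul_sub, σ]
    _ ≤ ∑ j, σ j * propDiv W j - ∑ j, σ j * w j := by
        rw [sum_mul_propDiv, sum_mul_propDiv]
        exact sub_le_sub_right
          (div_le_div_of_nonneg_right (sum_le_sum fun i _ => h i) n.cast_nonneg) _
    _ = ∑ j, σ j * (propDiv W j - w j) := by simp only [mul_sub, sum_sub_distrib]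
    _ ≤ l1 w (propDiv W) := sum_mul_sub_le_l1 (signPattern_eq_one_or_neg_one _ _) _ _

end Loss

theorem worst_case_three_type_general {n : ℕ}
    (f : (Fin n → Fin 3 → ℝ) → (Fin 3 → ℝ)) (Y : PhantomSystem n)
    (hf : IsMovingPhantom f Y)
    (V : Fin n → Fin 3 → ℝ) (hV : ∀ i, IsDivision (V i)) :
    ∃ W : Fin n → Fin 3 → ℝ, (∀ i, IsDivision (W i)) ∧
      ThreeTypeProfile f W ∧ loss f V ≤ loss f W := by
  obtain ⟨t, ht, -, hfV⟩ := hf V hV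
  have hdiv := hf.isDivision hV
  choose W hWdiv hWtype hWside hWscore using fun i =>
    exists_threeType_replacement hdiv (hV i) (signPattern_eq_one_or_neg_one (f V) (propDiv V))
  have hfV' : f V = phantomMedian V (fun k => Y.y k t) := funext hfV
  have hmedW : phantomMedian W (fun k => Y.y k t) = f V :=
    hfV' ▸ funext (phantomMedian_eq_of_sameSide (hfV' ▸ hWside))
  have hfW : f W = f V := funext fun j => by
    rw [hf.apply_eq_phantomMedian hWdiv ht (by simpa only [hmedW] using hdiv.2), hmedW]
  refine ⟨W, hWdiv, fun i => hfW ▸ hWtype i, ?_⟩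
  rw [loss, loss, hfW]
  exact l1_propDiv_le_of_sum_signPattern_mul_le hWscore

/-- Let `f` be a moving phantom mechanism for `m = 3` and `V` a locally
maximal profile (no single voter change increases the ℓ1-loss). Then there is a
three-type profile `W` with `ℓ(W) ≥ ℓ(V)`. -/
theorem worst_case_three_type {n : ℕ} (hn : 1 ≤ n)
    (f : (Fin n → Fin 3 → ℝ) → (Fin 3 → ℝ)) (Y : PhantomSystem n)
    (hf : IsMovingPhantom f Y)
    (V : Fin n → Fin 3 → ℝ) (hV : ∀ i, IsDivision (V i))
    (hmax : ∀ i : Fin n, ∀ v' : Fin 3 → ℝ, IsDivision v' →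
      loss f (Function.update V i v') ≤ loss f V) :
    ∃ W : Fin n → Fin 3 → ℝ, (∀ i, IsDivision (W i)) ∧
      ThreeTypeProfile f W ∧ loss f V ≤ loss f W :=
  worst_case_three_type_general f Y hf V hV
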